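/- Let d ≥ 2, 0 < p < d, and let φ: [n₀, ∞) → ℝ satisfy the subadditive relation φ(mu) ≤ m^d·φ(u) + C·m^d·u^p for all positive integers m and all u ≥ n₀, as well as φ(u) ≤ C·u^d for all u. If α := lim_{t→∞} φ(t)/t^d exists and is finite, then for all u ≥ n₀, α ≤ φ(u)/u^d + C·u^{−(d−p)}. -/
import Mathlib


open Filter

/-- Abstract subadditivity argument: if `φ(mu) ≤ m^d φ(u) + C m^d u^p` and
`φ(u) ≤ C u^d`, and `φ(t)/t^d → α`, then `α ≤ φ(u)/u^d + C u^{−(d−p)}`. -/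
theorem subadditive_rate (d : ℕ) (hd : 2 ≤ d) (p : ℝ) (hp0 : 0 < p) (hpd : p < d)
    (n₀ : ℝ) (hn₀ : 0 < n₀) (C : ℝ) (hC : 0 < C) (φ : ℝ → ℝ) (α : ℝ)
    (hsub : ∀ m : ℕ, 1 ≤ m → ∀ u : ℝ, n₀ ≤ u →
      φ (m * u) ≤ (m : ℝ) ^ d * φ u + C * (m : ℝ) ^ d * u ^ p)
    (hgrowth : ∀ u : ℝ, n₀ ≤ u → φ u ≤ C * u ^ (d : ℝ))
    (hlim : Tendsto (fun t => φ t / t ^ (d : ℝ)) atTop (nhds α)) :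
    ∀ u : ℝ, n₀ ≤ u → α ≤ φ u / u ^ (d : ℝ) + C * u ^ (-((d : ℝ) - p)) := by
  intro u hu
  have hu0 : 0 < u := hn₀.trans_le hu
  have hud : (0:ℝ) < u ^ (d:ℝ) := Real.rpow_pos_of_pos hu0 _
  have hup : (0:ℝ) < u ^ p := Real.rpow_pos_of_pos hu0 _
  have key : ∀ m : ℕ, 1 ≤ m →
      φ ((m:ℝ) * u) / ((m:ℝ) * u) ^ (d:ℝ) ≤ φ u / u ^ (d:ℝ) + C * u ^ (-((d:ℝ) - p)) := by
    intro m hm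
    have hm0 : (0:ℝ) < m := by exact_mod_cast hm
    have hmd : (0:ℝ) < (m:ℝ) ^ d := by positivity
    have hpow : ((m:ℝ) * u) ^ (d:ℝ) = (m:ℝ) ^ d * u ^ (d:ℝ) := by
      rw [Real.mul_rpow hm0.le hu0.le, Real.rpow_natCast]
    rw [hpow]
    have h1 := hsub m hm u hu
    have heq : u ^ (-((d:ℝ) - p)) = u ^ p / u ^ (d:ℝ) := by
      rw [← Real.rpow_sub hu0]; ring_nf
    rw [heq, div_le_iff₀ (by positivity)]
    calc φ ((m:ℝ) * u) ≤ (m:ℝ) ^ d * φ u + C * (m:ℝ) ^ d * u ^ p := h1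
      _ = (φ u / u ^ (d:ℝ) + C * (u ^ p / u ^ (d:ℝ))) * ((m:ℝ) ^ d * u ^ (d:ℝ)) := by
          field_simp
  have ht : Tendsto (fun m : ℕ => (m:ℝ) * u) atTop atTop :=
    Tendsto.atTop_mul_const hu0 tendsto_natCast_atTop_atTop
  have hcomp : Tendsto (fun m : ℕ => φ ((m:ℝ) * u) / ((m:ℝ) * u) ^ (d:ℝ)) atTop (nhds α) :=
    hlim.comp ht
  exact le_of_tendsto hcomp (eventually_atTop.2 ⟨1, key⟩)
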